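/- Let γ = 1 − α/[W⁻¹ P e_j]_j with 0 < α < [W⁻¹ P e_j]_j = ‖P e_j‖₂. Then x* = γ e_j is the unique minimizer of J(x) = ½‖P x − P e_j‖₂² + α ‖W x‖₁ over ℝⁿ. -/

import Mathlib

open Matrix Finset

noncomputable def enorm₂ {n : ℕ} (v : Fin n → ℝ) : ℝ := Real.sqrt (∑ i, v i ^ 2)

noncomputable def wInvP {n : ℕ} (P : Matrix (Fin n) (Fin n) ℝ) (j i : Fin n) : ℝ :=
  P.mulVec (Pi.single j 1) i / enorm₂ (P.mulVec (Pi.single i 1))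

/-- The regularized functional `J(x) = ½‖P x − P e_j‖₂² + α ∑ i ‖P e_i‖₂ |x i|`. -/
noncomputable def Jfun {n : ℕ} (P : Matrix (Fin n) (Fin n) ℝ) (j : Fin n) (α : ℝ)
    (x : Fin n → ℝ) : ℝ :=
  (1 / 2) * ∑ k, (P.mulVec x k - P.mulVec (Pi.single j 1) k) ^ 2 +
    α * ∑ i, enorm₂ (P.mulVec (Pi.single i 1)) * |x i|

/-!
`J` is a weighted lasso objective with design matrix `P` and data `P e_j`. As `P` is a symmetric
projection, the residual correlation at `x* = γ e_j` is `Pᵀ (P e_j - P x*) = (α / ‖P e_j‖) P e_j`,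
whose `i`-th entry `(α / ‖P e_j‖) ⟪P e_i, P e_j⟫` equals `α ‖P e_j‖` for `i = j` and, by the strict
Cauchy–Schwarz inequality for non-parallel columns, is smaller than `α ‖P e_i‖` in absolute value
for `i ≠ j`. Hence `J (x* + d) - J x* = ½ ‖P d‖² + ∑ i gᵢ` with subgradient gaps `gᵢ ≥ 0`; some
`gᵢ` is positive if `d` leaves the support `{j}`, and otherwise `P d ≠ 0` because `P e_j ≠ 0`.
-/

theorem abs_real_inner_lt_norm_mul_norm {F : Type*} [NormedAddCommGroup F]
    [InnerProductSpace ℝ F] {x y : F} (hx : x ≠ 0) (hxy : ∀ r : ℝ, y ≠ r • x) :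
    |inner ℝ x y| < ‖x‖ * ‖y‖ := by
  refine (abs_real_inner_le_norm x y).lt_of_ne fun heq => ?_
  have hy : y ≠ 0 := by simpa using hxy 0
  obtain ⟨r, -, rfl⟩ := (norm_inner_eq_norm_iff hx hy).mp (by rwa [Real.norm_eq_abs])
  exact hxy r rfl

lemma mul_le_mul_abs_of_abs_le {r c : ℝ} (h : |r| ≤ c) (t : ℝ) : r * t ≤ c * |t| :=
  calc r * t ≤ |r| * |t| := by rw [← abs_mul]; exact le_abs_self _
    _ ≤ c * |t| := by gcongr

lemma mul_lt_mul_abs_of_abs_lt {r c t : ℝ} (h : |r| < c) (ht : t ≠ 0) : r * t < c * |t| :=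
  calc r * t ≤ |r| * |t| := by rw [← abs_mul]; exact le_abs_self _
    _ < c * |t| := by gcongr

section Lasso

variable {m ι : Type*} [Fintype m] [Fintype ι]

noncomputable def lassoObjective (A : Matrix m ι ℝ) (b : m → ℝ) (c x : ι → ℝ) : ℝ :=
  (1 / 2) * ∑ k, (A *ᵥ x - b) k ^ 2 + ∑ i, c i * |x i|

/-- A strict dual certificate for `x`: `Aᵀ (b - A x)` is a subgradient of `∑ i, c i * |x i|` at `x`,
strictly inside the box off the support of `x`, and `A` is injective on vectors supported there. -/
structure IsLassoCertificate (A : Matrix m ι ℝ) (b : m → ℝ) (c x : ι → ℝ) : Prop where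
  abs_le : ∀ i, |(Aᵀ *ᵥ (b - A *ᵥ x)) i| ≤ c i
  mul_eq : ∀ i, (Aᵀ *ᵥ (b - A *ᵥ x)) i * x i = c i * |x i|
  abs_lt : ∀ i, x i = 0 → |(Aᵀ *ᵥ (b - A *ᵥ x)) i| < c i
  injOn_support : ∀ d, (∀ i, x i = 0 → d i = 0) → A *ᵥ d = 0 → d = 0

lemma sum_sq_mulVec_add_sub (A : Matrix m ι ℝ) (b : m → ℝ) (x d : ι → ℝ) :
    ∑ k, (A *ᵥ (x + d) - b) k ^ 2 =
      ∑ k, (A *ᵥ x - b) k ^ 2 + ∑ k, (A *ᵥ d) k ^ 2 - 2 * (d ⬝ᵥ (Aᵀ *ᵥ (b - A *ᵥ x))) := by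
  rw [mulVec_transpose, dotProduct_comm, ← dotProduct_mulVec]
  simp only [mulVec_add, dotProduct, Pi.sub_apply, Pi.add_apply, mul_sum, ← sum_add_distrib,
    ← sum_sub_distrib]
  exact sum_congr rfl fun k _ => by ring

lemma lassoObjective_add (A : Matrix m ι ℝ) (b : m → ℝ) (c x d : ι → ℝ) :
    lassoObjective A b c (x + d) = lassoObjective A b c x + (1 / 2) * ∑ k, (A *ᵥ d) k ^ 2 +
      ∑ i, (c i * |x i + d i| - c i * |x i| - (Aᵀ *ᵥ (b - A *ᵥ x)) i * d i) := by
  rw [lassoObjective, lassoObjective, sum_sq_mulVec_add_sub, dotProduct_comm]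
  simp only [dotProduct, sum_sub_distrib, Pi.add_apply]
  ring

theorem IsLassoCertificate.lt_of_ne {A : Matrix m ι ℝ} {b : m → ℝ} {c x y : ι → ℝ}
    (hx : IsLassoCertificate A b c x) (hy : y ≠ x) :
    lassoObjective A b c x < lassoObjective A b c y := by
  set r := Aᵀ *ᵥ (b - A *ᵥ x)
  obtain ⟨d, rfl⟩ : ∃ d, y = x + d := ⟨y - x, by abel⟩
  have hd : d ≠ 0 := by rintro rfl; simp at hy
  -- By `mul_eq`, each summand equals `c i * |x i + d i| - r i * (x i + d i)`.
  have hgap : ∀ i, 0 ≤ c i * |x i + d i| - c i * |x i| - r i * d i := fun i => by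
    linarith [mul_le_mul_abs_of_abs_le (hx.abs_le i) (x i + d i), hx.mul_eq i]
  rw [lassoObjective_add]
  by_cases hsupp : ∀ i, x i = 0 → d i = 0
  · obtain ⟨k, hk⟩ := Function.ne_iff.mp fun h => hd (hx.injOn_support d hsupp h)
    have hsq : 0 < ∑ k, (A *ᵥ d) k ^ 2 :=
      sum_pos' (fun k _ => sq_nonneg _) ⟨k, mem_univ k, pow_two_pos_of_ne_zero hk⟩
    linarith [sum_nonneg fun i (_ : i ∈ univ) => hgap i]
  · push Not at hsupp
    obtain ⟨i, hxi, hdi⟩ := hsupp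
    have hpos : 0 < c i * |x i + d i| - c i * |x i| - r i * d i := by
      simp only [hxi, zero_add, abs_zero, mul_zero, sub_zero]
      linarith [mul_lt_mul_abs_of_abs_lt (hx.abs_lt i hxi) hdi]
    linarith [sum_pos' (fun i _ => hgap i) ⟨i, mem_univ i, hpos⟩,
      sum_nonneg fun k (_ : k ∈ univ) => sq_nonneg ((A *ᵥ d) k)]

end Lasso

section Projection

variable {ι : Type*} [Fintype ι] {P : Matrix ι ι ℝ}

lemma transpose_mulVec_mulVec_of_idempotent (hsymm : Pᵀ = P) (hidem : P * P = P)
    (v : ι → ℝ) : Pᵀ *ᵥ (P *ᵥ v) = P *ᵥ v := by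
  rw [hsymm, mulVec_mulVec, hidem]

lemma mulVec_single_dotProduct_mulVec_single [DecidableEq ι] (hsymm : Pᵀ = P) (hidem : P * P = P)
    (i j : ι) :
    (P *ᵥ Pi.single i 1) ⬝ᵥ (P *ᵥ Pi.single j 1) = P i j := by
  rw [dotProduct_mulVec, ← mulVec_transpose, transpose_mulVec_mulVec_of_idempotent hsymm hidem,
    dotProduct_single_one, mulVec_single_one, col_apply]
  exact congrFun₂ hsymm i j

end Projection

section

variable {n : ℕ}

lemma enorm₂_eq_norm (v : Fin n → ℝ) : enorm₂ v = ‖WithLp.toLp 2 v‖ := by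
  simp [enorm₂, EuclideanSpace.norm_eq, sq_abs]

lemma enorm₂_sq (v : Fin n → ℝ) : enorm₂ v ^ 2 = v ⬝ᵥ v := by
  rw [enorm₂, Real.sq_sqrt (sum_nonneg fun i _ => sq_nonneg (v i))]
  simp only [dotProduct, sq]

lemma enorm₂_pos {v : Fin n → ℝ} (hv : v ≠ 0) : 0 < enorm₂ v := by
  rw [enorm₂_eq_norm, norm_pos_iff]
  exact fun h => hv (congrArg WithLp.ofLp h)

lemma abs_dotProduct_lt_enorm₂_mul {u v : Fin n → ℝ} (hu : u ≠ 0)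
    (huv : ∀ c : ℝ, v ≠ c • u) : |u ⬝ᵥ v| < enorm₂ u * enorm₂ v := by
  rw [enorm₂_eq_norm, enorm₂_eq_norm, dotProduct_comm]
  exact abs_real_inner_lt_norm_mul_norm (x := WithLp.toLp 2 u) (y := WithLp.toLp 2 v)
    (fun h => hu (congrArg WithLp.ofLp h)) fun c h => huv c (congrArg WithLp.ofLp h)

variable {P : Matrix (Fin n) (Fin n) ℝ}

lemma abs_apply_lt_enorm₂_mul_enorm₂ (hsymm : Pᵀ = P) (hidem : P * P = P) {i j : Fin n}
    (hi : P *ᵥ Pi.single i 1 ≠ 0) (hij : ∀ c : ℝ, P *ᵥ Pi.single j 1 ≠ c • P *ᵥ Pi.single i 1) :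
    |P i j| < enorm₂ (P *ᵥ Pi.single i 1) * enorm₂ (P *ᵥ Pi.single j 1) := by
  rw [← mulVec_single_dotProduct_mulVec_single hsymm hidem]
  exact abs_dotProduct_lt_enorm₂_mul hi hij

lemma wInvP_self (hsymm : Pᵀ = P) (hidem : P * P = P) (j : Fin n) :
    wInvP P j j = enorm₂ (P *ᵥ Pi.single j 1) := by
  have hdiag : (P *ᵥ Pi.single j 1) j = enorm₂ (P *ᵥ Pi.single j 1) ^ 2 := by
    rw [enorm₂_sq, mulVec_single_dotProduct_mulVec_single hsymm hidem, mulVec_single_one, col_apply]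
  rw [wInvP, hdiag, sq, mul_self_div_self]

lemma Jfun_eq_lassoObjective (j : Fin n) (α : ℝ) :
    Jfun P j α = lassoObjective P (P *ᵥ Pi.single j 1)
      (fun i => α * enorm₂ (P *ᵥ Pi.single i 1)) := by
  ext x
  simp only [Jfun, lassoObjective, Pi.sub_apply, mul_sum, mul_assoc]

lemma isLassoCertificate_smul_single (hsymm : Pᵀ = P) (hidem : P * P = P)
    (hnz : ∀ i : Fin n, P *ᵥ Pi.single i 1 ≠ 0) {j : Fin n}
    (hpar : ∀ i : Fin n, i ≠ j → ∀ c : ℝ, P *ᵥ Pi.single j 1 ≠ c • P *ᵥ Pi.single i 1)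
    {α : ℝ} (hα0 : 0 < α) (hα1 : α < enorm₂ (P *ᵥ Pi.single j 1)) :
    IsLassoCertificate P (P *ᵥ Pi.single j 1) (fun i => α * enorm₂ (P *ᵥ Pi.single i 1))
      ((1 - α / enorm₂ (P *ᵥ Pi.single j 1)) • Pi.single j 1) := by
  set s := enorm₂ (P *ᵥ Pi.single j 1) with hs_def
  have hs : 0 < s := enorm₂_pos (hnz j)
  have hγ : 0 < 1 - α / s := by rw [sub_pos, div_lt_one hs]; exact hα1
  have hx : ∀ i, ((1 - α / s) • Pi.single j 1 : Fin n → ℝ) i = if i = j then 1 - α / s else 0 :=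
    fun i => by simp [Pi.single_apply]
  have hres : ∀ i, (Pᵀ *ᵥ (P *ᵥ Pi.single j 1 - P *ᵥ ((1 - α / s) • Pi.single j 1))) i =
      α / s * P i j := fun i => by
    have : Pi.single j 1 - (1 - α / s) • Pi.single j 1 = (α / s) • (Pi.single j 1 : Fin n → ℝ) :=
      by module
    rw [← mulVec_sub, this, transpose_mulVec_mulVec_of_idempotent hsymm hidem, mulVec_smul,
      Pi.smul_apply, mulVec_single_one, col_apply, smul_eq_mul]
  have hdiag : α / s * P j j = α * s := by
    rw [← mulVec_single_dotProduct_mulVec_single hsymm hidem, ← enorm₂_sq, ← hs_def]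
    field_simp
  have hoff : ∀ i, i ≠ j → |α / s * P i j| < α * enorm₂ (P *ᵥ Pi.single i 1) := fun i hij => by
    have hcs := abs_apply_lt_enorm₂_mul_enorm₂ hsymm hidem (hnz i) (hpar i hij)
    rw [abs_mul, abs_of_pos (div_pos hα0 hs)]
    calc α / s * |P i j| < α / s * (enorm₂ (P *ᵥ Pi.single i 1) * s) := by gcongr
      _ = α * enorm₂ (P *ᵥ Pi.single i 1) := by field_simp
  refine ⟨fun i => ?_, fun i => ?_, fun i hi => ?_, fun d hd hPd => ?_⟩
  · rw [hres]
    rcases eq_or_ne i j with rfl | hij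
    · rw [hdiag, abs_of_pos (by positivity)]
    · exact (hoff i hij).le
  · rw [hres, hx]
    rcases eq_or_ne i j with rfl | hij
    · rw [if_pos rfl, hdiag, abs_of_pos hγ]
    · simp [hij]
  · rw [hres]
    refine hoff i fun hij => ?_
    rw [hx, if_pos hij] at hi
    exact hγ.ne' hi
  · have hd' : d = d j • Pi.single j 1 := by
      ext i
      rcases eq_or_ne i j with rfl | hij
      · simp
      · simp [hij, hd i (by simp [hx, hij])]
    rw [hd', mulVec_smul, smul_eq_zero] at hPd
    rw [hd', hPd.resolve_right (hnz j), zero_smul]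

end

/-- Let `γ = 1 − α/[W⁻¹ P e_j]_j` with `0 < α < [W⁻¹ P e_j]_j = ‖P e_j‖₂`. Then
`x* = γ • e_j` is the unique minimizer of `J` over `ℝⁿ`. -/
theorem regularized_unique_minimizer {n : ℕ}
    (P : Matrix (Fin n) (Fin n) ℝ) (hsymm : Pᵀ = P) (hidem : P * P = P)
    (hnz : ∀ i : Fin n, P.mulVec (Pi.single i 1) ≠ 0)
    (j : Fin n)
    (hpar : ∀ i : Fin n, i ≠ j → ∀ c : ℝ,
      P.mulVec (Pi.single j 1) ≠ c • P.mulVec (Pi.single i 1))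
    (α : ℝ) (hα0 : 0 < α) (hα1 : α < wInvP P j j) :
    wInvP P j j = enorm₂ (P.mulVec (Pi.single j 1)) ∧
    ∀ y : Fin n → ℝ, y ≠ (1 - α / wInvP P j j) • (Pi.single j 1 : Fin n → ℝ) →
      Jfun P j α ((1 - α / wInvP P j j) • (Pi.single j 1 : Fin n → ℝ)) < Jfun P j α y := by
  have hW := wInvP_self hsymm hidem j
  refine ⟨hW, fun y hy => ?_⟩
  rw [hW] at hα1 hy ⊢
  rw [Jfun_eq_lassoObjective]
  exact (isLassoCertificate_smul_single hsymm hidem hnz hpar hα0 hα1).lt_of_ne hy
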